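/- Let n ≥ 2 and let g_{ij} (for i < j in Fin n) be real numbers satisfying g_{il} + g_{jk} > g_{ik} + g_{jl} for all i < j < k < l and g_{il} > g_{ik} + g_{kl} for all i < k < l. Let S = { v : Fin n → ℝ | v₀ = 0 and vⱼ − vᵢ ≥ g_{ij} for all i < j }, and let v be an extreme point of the convex set S. Then the tight graph E(v) = { {i,j} | i < j, vⱼ − vᵢ = g_{ij} } is a spanning tree of Fin n (connected and acyclic, hence with exactly n − 1 edges) which is alternating (no i < j < k with both {i,j} and {j,k} in E(v)) and non-crossing (no i < j < k < l with both {i,k} and {j,l} in E(v)). -/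

import Mathlib

private theorem aux_no_walk {n : ℕ} (G : SimpleGraph (Fin n))
    (Ht : ∀ i j k : Fin n, i < j → j < k → G.Adj i j → G.Adj j k → False)
    (Hc : ∀ i j k l : Fin n, i < j → j < k → k < l → G.Adj i k → G.Adj j l → False)
    (M p : Fin n) (hpM : G.Adj p M) :
    ∀ (q x : Fin n) (w : G.Walk x q), G.Adj q M → q < M → p < q →
      (∀ u ∈ w.support, u < M) → p ≤ x → x < q → False
  | x, _, SimpleGraph.Walk.nil, _, _, _, _, _, hxq => absurd rfl hxq.ne
  | q, x, SimpleGraph.Walk.cons (v := y) h w, hqadj, hqM, hpq, hsup, hpx, hxq => by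
      have hyM : y < M := hsup y (by simp)
      rcases lt_trichotomy y q with hyq | rfl | hqy
      · rcases lt_or_ge y p with hyp | hpy
        · rcases eq_or_lt_of_le hpx with rfl | hpxlt
          · exact Ht y p M hyp (lt_trans hpq hqM) h.symm hpM
          · exact Hc y p x M hyp hpxlt (lt_trans hxq hqM) h.symm hpM
        · exact aux_no_walk G Ht Hc M p hpM q y w hqadj hqM hpq
            (fun u hu => hsup u (by simp [hu])) hpy hyq
      · exact Ht x y M hxq hqM h hqadj
      · exact Hc x q y M hxq hqy hyM h hqadj

private theorem aux_acyclic {n : ℕ} (G : SimpleGraph (Fin n))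
    (Ht : ∀ i j k : Fin n, i < j → j < k → G.Adj i j → G.Adj j k → False)
    (Hc : ∀ i j k l : Fin n, i < j → j < k → k < l → G.Adj i k → G.Adj j l → False) :
    G.IsAcyclic := by
  intro u c hc
  have hne : c.support.toFinset.Nonempty := ⟨u, by simp [c.start_mem_support]⟩
  set M := c.support.toFinset.max' hne with hM
  have hMmem : M ∈ c.support := by
    have := c.support.toFinset.max'_mem hne
    simpa using this
  have hMmax : ∀ x ∈ c.support, x ≤ M :=
    fun x hx => c.support.toFinset.le_max' x (by simpa using hx)
  set c' := c.rotate M hMmem with hc'def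
  have hc' : c'.IsCycle := (SimpleGraph.Walk.isCycle_rotate hMmem).mpr hc
  have hsup' : ∀ x ∈ c'.support, x ≤ M := by
    intro x hx
    rw [SimpleGraph.Walk.support_eq_cons] at hx
    rcases List.mem_cons.mp hx with rfl | hx
    · exact le_refl _
    · have hperm := SimpleGraph.Walk.support_rotate c M hMmem
      have : x ∈ c.support.tail := (hperm.mem_iff).mp hx
      exact hMmax x (List.mem_of_mem_tail this)
  have hnn : ¬ c'.Nil := by
    intro hnil
    have h3 := hc'.three_le_length
    rw [SimpleGraph.Walk.nil_iff_length_eq.mp hnil] at h3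
    omega
  obtain ⟨x1, h1, w1, hce⟩ := SimpleGraph.Walk.not_nil_iff.mp hnn
  have hx1mem : x1 ∈ c'.support := by rw [hce]; simp
  have hx1M : x1 < M := lt_of_le_of_ne (hsup' x1 hx1mem) h1.ne'
  have hw1nodup : w1.support.Nodup := by
    have := hc'.support_nodup
    rw [hce] at this
    simpa using this
  have hw1len : 3 ≤ w1.length + 1 := by
    have h3 := hc'.three_le_length
    rw [hce] at h3
    simpa using h3
  obtain ⟨y, h2, w2, hre⟩ := SimpleGraph.Walk.exists_eq_cons_of_ne h1.ne w1.reverse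
  have hlen : w1.length = w2.length + 1 := by
    have := congrArg SimpleGraph.Walk.length hre
    simpa [SimpleGraph.Walk.length_reverse] using this
  have hw1eq : w1.support = w2.support.reverse ++ [M] := by
    have : w1.reverse.support = M :: w2.support := by rw [hre]; simp
    rw [SimpleGraph.Walk.support_reverse] at this
    rw [← List.reverse_reverse w1.support, this]
    simp
  have hMnot : M ∉ w2.support := by
    intro hmem
    rw [hw1eq] at hw1nodup
    have := List.disjoint_of_nodup_append hw1nodup
    exact this (by simpa using hmem) (by simp)
  have hw2nodup : w2.support.Nodup := by
    rw [hw1eq] at hw1nodup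
    exact List.nodup_reverse.mp hw1nodup.of_append_left
  have hw2sub : ∀ z ∈ w2.support, z < M := by
    intro z hz
    have hz1 : z ∈ w1.support := by rw [hw1eq]; simp [hz]
    have : z ∈ c'.support := by rw [hce]; simp [hz1]
    exact lt_of_le_of_ne (hsup' z this) (fun h => hMnot (h ▸ hz))
  have hyM : y < M := hw2sub y w2.start_mem_support
  by_cases hNil : w2.Nil
  · have := SimpleGraph.Walk.nil_iff_length_eq.mp hNil
    omega
  · obtain ⟨z, h3, w3, hw2e⟩ := SimpleGraph.Walk.not_nil_iff.mp hNil
    have hxy : x1 ≠ y := by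
      intro hxyeq
      have hx1w3 : x1 ∈ w3.support := w3.end_mem_support
      have hs : w2.support = y :: w3.support := by rw [hw2e]; simp
      rw [hs] at hw2nodup
      exact (List.nodup_cons.mp hw2nodup).1 (hxyeq ▸ hx1w3)
    rcases lt_or_gt_of_ne hxy with hlt | hgt
    · exact aux_no_walk G Ht Hc M x1 h1.symm y x1 w2.reverse h2.symm hyM hlt
        (by intro a ha
            exact hw2sub a (by simpa [SimpleGraph.Walk.support_reverse] using ha))
        (le_refl x1) hlt
    · exact aux_no_walk G Ht Hc M y h2.symm x1 y w2 h1.symm hx1M hgt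
        (fun a ha => hw2sub a ha) (le_refl y) hgt

/-- Under the strict Monge-type conditions on `g`, the tight
graph of any extreme point (vertex) of the one-dimensional polyhedron of
constrained expansions `S = {v | v 0 = 0 ∧ ∀ i < j, v j - v i ≥ g i j}` is a
spanning tree (connected, acyclic, with exactly `n - 1` edges) that is
alternating (no transitive edges) and non-crossing (no crossing edges). -/
theorem extreme_point_tight_graph_is_noncrossing_alternating_tree
    (n : ℕ) (hn : 2 ≤ n) [NeZero n]
    (g : Fin n → Fin n → ℝ)
    (hmonge : ∀ i j k l : Fin n, i < j → j < k → k < l →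
      g i k + g j l < g i l + g j k)
    (htri : ∀ i k l : Fin n, i < k → k < l → g i k + g k l < g i l)
    (v : Fin n → ℝ)
    (hv : v ∈ Set.extremePoints ℝ
      {w : Fin n → ℝ | w 0 = 0 ∧ ∀ i j : Fin n, i < j → g i j ≤ w j - w i}) :
    (SimpleGraph.fromRel fun i j : Fin n => i < j ∧ v j - v i = g i j).Connected ∧
    (SimpleGraph.fromRel fun i j : Fin n => i < j ∧ v j - v i = g i j).IsAcyclic ∧
    (SimpleGraph.fromRel fun i j : Fin n => i < j ∧ v j - v i = g i j).edgeSet.ncard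
      = n - 1 ∧
    (∀ i j k : Fin n, i < j → j < k →
      ¬ (v j - v i = g i j ∧ v k - v j = g j k)) ∧
    (∀ i j k l : Fin n, i < j → j < k → k < l →
      ¬ (v k - v i = g i k ∧ v l - v j = g j l)) := by
  classical
  obtain ⟨⟨hv0, hvc⟩, hext⟩ := hv
  set G := SimpleGraph.fromRel fun i j : Fin n => i < j ∧ v j - v i = g i j with hG
  have halt : ∀ i j k : Fin n, i < j → j < k →
      ¬ (v j - v i = g i j ∧ v k - v j = g j k) := by
    rintro i j k hij hjk ⟨h1, h2⟩
    have h3 := htri i j k hij hjk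
    have h4 := hvc i k (hij.trans hjk)
    linarith
  have hcross : ∀ i j k l : Fin n, i < j → j < k → k < l →
      ¬ (v k - v i = g i k ∧ v l - v j = g j l) := by
    rintro i j k l hij hjk hkl ⟨h1, h2⟩
    have h3 := hmonge i j k l hij hjk hkl
    have h4 := hvc j k hjk
    have h5 := hvc i l (hij.trans (hjk.trans hkl))
    linarith
  have hadj : ∀ i j : Fin n, i < j → (G.Adj i j ↔ v j - v i = g i j) := by
    intro i j hij
    rw [hG, SimpleGraph.fromRel_adj]
    constructor
    · rintro ⟨-, h | h⟩
      · exact h.2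
      · exact absurd h.1 (asymm hij)
    · intro h
      exact ⟨hij.ne, Or.inl ⟨hij, h⟩⟩
  have Ht : ∀ i j k : Fin n, i < j → j < k → G.Adj i j → G.Adj j k → False :=
    fun i j k h1 h2 a1 a2 =>
      halt i j k h1 h2 ⟨(hadj i j h1).1 a1, (hadj j k h2).1 a2⟩
  have Hc : ∀ i j k l : Fin n, i < j → j < k → k < l → G.Adj i k → G.Adj j l → False :=
    fun i j k l h1 h2 h3 a1 a2 =>
      hcross i j k l h1 h2 h3 ⟨(hadj i k (h1.trans h2)).1 a1, (hadj j l (h2.trans h3)).1 a2⟩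
  have hreach : ∀ u : Fin n, G.Reachable 0 u := by
    by_contra hcon
    push_neg at hcon
    obtain ⟨u, hu⟩ := hcon
    set χ : Fin n → ℝ := fun i => if G.Reachable 0 i then 0 else 1 with hχ
    have hχ0 : χ 0 = 0 := by
      show (if G.Reachable 0 0 then (0:ℝ) else 1) = 0
      rw [if_pos (SimpleGraph.Reachable.refl 0)]
    have hχu : χ u = 1 := by simp [hχ, hu]
    have hχ01 : ∀ i, χ i = 0 ∨ χ i = 1 := by
      intro i
      by_cases h : G.Reachable 0 i <;> simp [hχ, h]
    have hχadj : ∀ i j, G.Adj i j → χ i = χ j := by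
      intro i j hA
      by_cases h : G.Reachable 0 i
      · have h2 : G.Reachable 0 j := h.trans hA.reachable
        simp [hχ, h, h2]
      · have h2 : ¬ G.Reachable 0 j := fun hr => h (hr.trans hA.symm.reachable)
        simp [hχ, h, h2]
    set F : Finset (Fin n × Fin n) :=
      Finset.univ.filter (fun p => p.1 < p.2 ∧ v p.2 - v p.1 ≠ g p.1 p.2) with hF
    by_cases hFne : F.Nonempty
    · set ε := F.inf' hFne (fun p => v p.2 - v p.1 - g p.1 p.2) with hε
      have hεpos : 0 < ε := by
        rw [hε, Finset.lt_inf'_iff]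
        rintro ⟨i, j⟩ hb
        simp only [hF, Finset.mem_filter, Finset.mem_univ, true_and] at hb
        have := hvc i j hb.1
        have := lt_of_le_of_ne this (Ne.symm hb.2)
        linarith
      have hεle : ∀ i j : Fin n, i < j → v j - v i ≠ g i j → ε ≤ v j - v i - g i j := by
        intro i j hij hnet
        have hmemF : (i, j) ∈ F := by
          rw [hF]; exact Finset.mem_filter.mpr ⟨Finset.mem_univ _, hij, hnet⟩
        rw [hε]
        exact Finset.inf'_le _ hmemF
      have hS : ∀ σ : ℝ, σ = 1 ∨ σ = -1 →
          (fun i => v i + σ * (ε * χ i)) ∈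
            {w : Fin n → ℝ | w 0 = 0 ∧ ∀ i j : Fin n, i < j → g i j ≤ w j - w i} := by
        intro σ hσ
        constructor
        · show v 0 + σ * (ε * χ 0) = 0
          rw [hχ0, hv0]; ring
        · intro i j hij
          show g i j ≤ (v j + σ * (ε * χ j)) - (v i + σ * (ε * χ i))
          by_cases htight : v j - v i = g i j
          · have hAdj : G.Adj i j := (hadj i j hij).2 htight
            have hee : χ i = χ j := hχadj i j hAdj
            rw [hee]
            linarith
          · have hsl := hεle i j hij htight
            have hgle := hvc i j hij
            rcases hσ with rfl | rfl <;> rcases hχ01 i with hi | hi <;>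
              rcases hχ01 j with hj | hj <;> rw [hi, hj] <;> linarith
      have hw1S := hS 1 (Or.inl rfl)
      have hw2S := hS (-1) (Or.inr rfl)
      have hseg : v ∈ openSegment ℝ (fun i => v i + 1 * (ε * χ i))
          (fun i => v i + (-1) * (ε * χ i)) := by
        refine ⟨1/2, 1/2, by norm_num, by norm_num, by norm_num, ?_⟩
        funext i
        simp only [Pi.add_apply, Pi.smul_apply, smul_eq_mul]
        ring
      obtain ⟨he1, he2⟩ := (mem_extremePoints.mp (show v ∈ Set.extremePoints ℝ {w : Fin n → ℝ | w 0 = 0 ∧ ∀ i j : Fin n, i < j → g i j ≤ w j - w i} from ⟨⟨hv0, hvc⟩, hext⟩)).2 _ hw1S _ hw2S hseg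
      have := congrFun he1 u
      rw [hχu] at this
      simp at this
      linarith
    · have hall : ∀ i j : Fin n, i < j → v j - v i = g i j := by
        intro i j hij
        by_contra hnet
        exact hFne ⟨(i, j), by rw [hF]; exact Finset.mem_filter.mpr ⟨Finset.mem_univ _, hij, hnet⟩⟩
      have hu0 : u ≠ 0 := by
        rintro rfl
        exact hu (SimpleGraph.Reachable.refl 0)
      have h0u : (0 : Fin n) < u := (Fin.zero_le u).lt_of_ne (Ne.symm hu0)
      exact hu ((hadj 0 u h0u).2 (hall 0 u h0u)).reachable
  have hconn : G.Connected := by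
    rw [SimpleGraph.connected_iff]
    exact ⟨fun a b => (hreach a).symm.trans (hreach b), ⟨0⟩⟩
  have hacyc : G.IsAcyclic := aux_acyclic G Ht Hc
  have htree : G.IsTree := ⟨hconn, hacyc⟩
  haveI : Fintype G.edgeSet := Fintype.ofFinite _
  have hcard := htree.card_edgeFinset
  rw [Fintype.card_fin] at hcard
  refine ⟨hconn, hacyc, ?_, halt, hcross⟩
  rw [Set.ncard_eq_toFinset_card' G.edgeSet]
  have : G.edgeSet.toFinset = G.edgeFinset := rfl
  rw [this]
  omega
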